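/- arXiv:2604.17145 — 4 statements merged into one kernel-verified Lean document; each statement's English description precedes it below -/
import Mathlib

section
/- Let g : ℝ^d → ℝ be a differentiable function that is 1-smooth (∇g is 1-Lipschitz) and μ-strongly convex with 0 ≤ μ < 1. Then for all points a, b, the co-coercivity quantity C_g(a,b) := g(a) - g(b) - ⟨∇g(b), a - b⟩ - (μ/2)‖a-b‖² - (1/(2(1-μ)))‖∇g(a) - ∇g(b) - μ(a-b)‖² is non-negative. -/
/-!
Put `h x = g x - μ/2 ‖x‖²`, a convex function with gradient `h' x = g' x - μ x`. Since `g'` is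
1-Lipschitz, `x ↦ (1-μ) x - h' x = x - g' x` is monotone, so `(1-μ)/2 ‖·‖² - h` lies above its
tangent planes, i.e. `h` lies below the paraboloids `h x + ⟪h' x, y - x⟫ + (1-μ)/2 ‖y - x‖²`.
For a convex function with such quadratic upper bounds, comparing the lower tangent bound at `b`
with the upper bound at `a`, both evaluated at the gradient step `a - (h' a - h' b)/(1-μ)`, gives
`‖h' a - h' b‖² / (2(1-μ)) ≤ h a - h b - ⟪h' b, a - b⟫`, which is the claim rewritten in terms of `g`.
-/

open scoped RealInnerProductSpace

section Gradient

variable {F : Type*} [NormedAddCommGroup F] [InnerProductSpace ℝ F]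

theorem half_mul_norm_sq_sub_half_mul_norm_sq (c : ℝ) (x y : F) :
    c / 2 * ‖y‖ ^ 2 - c / 2 * ‖x‖ ^ 2 = ⟪c • x, y - x⟫ + c / 2 * ‖y - x‖ ^ 2 := by
  rw [real_inner_smul_left, inner_sub_right, real_inner_self_eq_norm_sq, norm_sub_sq_real,
    real_inner_comm]
  ring

variable [CompleteSpace F] {f : F → ℝ} {f' : F → F}

theorem HasGradientAt.sub {f₁ f₂ : F → ℝ} {v₁ v₂ x : F}
    (h₁ : HasGradientAt f₁ v₁ x) (h₂ : HasGradientAt f₂ v₂ x) :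
    HasGradientAt (fun y => f₁ y - f₂ y) (v₁ - v₂) x := by
  rw [hasGradientAt_iff_hasFDerivAt, map_sub]
  exact h₁.hasFDerivAt.sub h₂.hasFDerivAt

theorem hasGradientAt_half_mul_norm_sq (c : ℝ) (x : F) :
    HasGradientAt (fun y : F => c / 2 * ‖y‖ ^ 2) (c • x) x := by
  rw [hasGradientAt_iff_hasFDerivAt]
  refine ((hasFDerivAt_id x).norm_sq.const_mul (c / 2)).congr_fderiv ?_
  ext v
  simp only [ContinuousLinearMap.comp_id, smul_apply, coe_innerSL_apply, nsmul_eq_mul,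
    smul_eq_mul, InnerProductSpace.toDual_apply_apply, id_eq, real_inner_smul_left]
  ring

theorem HasGradientAt.hasDerivAt_add_smul {x v g : F} {t : ℝ}
    (hf : HasGradientAt f g (x + t • v)) :
    HasDerivAt (fun s : ℝ => f (x + s • v)) ⟪g, v⟫ t := by
  have hline : HasDerivAt (fun s : ℝ => x + s • v) v t := by
    simpa using ((hasDerivAt_id t).smul_const v).const_add x
  have h := hf.hasFDerivAt.comp_hasDerivAt t hline
  simp only [InnerProductSpace.toDual_apply_apply] at h
  exact h

theorem ConvexOn.add_inner_gradient_le (hconv : ConvexOn ℝ Set.univ f)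
    (hf : ∀ x, HasGradientAt f (f' x) x) (x y : F) :
    f x + ⟪f' x, y - x⟫ ≤ f y := by
  have hline : ConvexOn ℝ Set.univ (fun t : ℝ => f (x + t • (y - x))) := by
    have hcomp : (fun t : ℝ => f (x + t • (y - x))) = f ∘ AffineMap.lineMap x y := by
      funext t
      simp [AffineMap.lineMap_apply_module', add_comm]
    simpa [hcomp] using hconv.comp_affineMap (AffineMap.lineMap x y)
  have hderiv : HasDerivAt (fun t : ℝ => f (x + t • (y - x))) ⟪f' x, y - x⟫ 0 :=
    HasGradientAt.hasDerivAt_add_smul (by simpa using hf x)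
  have hslope := hline.le_slope_of_hasDerivAt (Set.mem_univ 0) (Set.mem_univ 1) one_pos hderiv
  simp only [slope_def_field, one_smul, zero_smul, add_zero, sub_zero, div_one,
    add_sub_cancel] at hslope
  linarith

theorem add_inner_gradient_le_of_monotone (hf : ∀ x, HasGradientAt f (f' x) x)
    (hmono : ∀ a b, 0 ≤ ⟪f' a - f' b, a - b⟫) (x y : F) :
    f x + ⟪f' x, y - x⟫ ≤ f y := by
  have hderiv (t : ℝ) :
      HasDerivAt (fun t : ℝ => f (x + t • (y - x))) ⟪f' (x + t • (y - x)), y - x⟫ t :=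
    (hf _).hasDerivAt_add_smul
  obtain ⟨c, ⟨hc0, -⟩, hmvt⟩ := exists_hasDerivAt_eq_slope _ _ one_pos
    (fun t _ => (hderiv t).continuousAt.continuousWithinAt) (fun t _ => hderiv t)
  have hstep : 0 ≤ c * ⟪f' (x + c • (y - x)) - f' x, y - x⟫ := by
    simpa [real_inner_smul_right] using hmono (x + c • (y - x)) x
  simp only [one_smul, zero_smul, add_zero, sub_zero, div_one, add_sub_cancel] at hmvt
  rw [inner_sub_left] at hstep
  nlinarith

theorem le_add_inner_gradient_add_half_mul_norm_sq (hf : ∀ x, HasGradientAt f (f' x) x) {L : ℝ}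
    (hL : ∀ a b, ⟪f' a - f' b, a - b⟫ ≤ L * ‖a - b‖ ^ 2) (x y : F) :
    f y ≤ f x + ⟪f' x, y - x⟫ + L / 2 * ‖y - x‖ ^ 2 := by
  have hq : ∀ x, HasGradientAt (fun y => L / 2 * ‖y‖ ^ 2 - f y) (L • x - f' x) x :=
    fun x => (hasGradientAt_half_mul_norm_sq L x).sub (hf x)
  have hmono : ∀ a b, 0 ≤ ⟪(L • a - f' a) - (L • b - f' b), a - b⟫ := by
    intro a b
    have hab : (L • a - f' a) - (L • b - f' b) = L • (a - b) - (f' a - f' b) := by module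
    rw [hab, inner_sub_left, real_inner_smul_left, real_inner_self_eq_norm_sq]
    linarith [hL a b]
  have h := add_inner_gradient_le_of_monotone hq hmono x y
  rw [inner_sub_left] at h
  linarith [half_mul_norm_sq_sub_half_mul_norm_sq L x y]

theorem ConvexOn.norm_sub_gradient_sq_le (hconv : ConvexOn ℝ Set.univ f)
    (hf : ∀ x, HasGradientAt f (f' x) x) {K : ℝ} (hK : 0 < K)
    (hupper : ∀ x y, f y ≤ f x + ⟪f' x, y - x⟫ + K / 2 * ‖y - x‖ ^ 2) (a b : F) :
    1 / (2 * K) * ‖f' a - f' b‖ ^ 2 ≤ f a - f b - ⟪f' b, a - b⟫ := by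
  set v := f' a - f' b
  set c := a - K⁻¹ • v
  have hlower := hconv.add_inner_gradient_le hf b c
  have hupper := hupper a c
  have hcb : c - b = (a - b) - K⁻¹ • v := by module
  have hca : c - a = -(K⁻¹ • v) := by module
  rw [hcb, inner_sub_right, real_inner_smul_right] at hlower
  rw [hca, inner_neg_right, real_inner_smul_right, norm_neg, norm_smul, mul_pow, norm_inv,
    Real.norm_eq_abs, inv_pow, sq_abs] at hupper
  have hvv : ⟪f' a, v⟫ - ⟪f' b, v⟫ = ‖v‖ ^ 2 := by
    rw [← inner_sub_left, real_inner_self_eq_norm_sq]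
  have hgap : K⁻¹ * ⟪f' a, v⟫ - K⁻¹ * ⟪f' b, v⟫ - K / 2 * ((K ^ 2)⁻¹ * ‖v‖ ^ 2)
      = 1 / (2 * K) * ‖v‖ ^ 2 := by
    rw [← mul_sub, hvv]
    field_simp
    ring
  linarith

end Gradient

theorem cocoercivity_general (d : ℕ) (μ : ℝ) (hμ1 : μ < 1)
    (g : EuclideanSpace ℝ (Fin d) → ℝ) (g' : EuclideanSpace ℝ (Fin d) → EuclideanSpace ℝ (Fin d))
    (hgrad : ∀ x, HasGradientAt g (g' x) x)
    (hsmooth : ∀ a b, ‖g' a - g' b‖ ≤ ‖a - b‖)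
    (hconv : ConvexOn ℝ Set.univ (fun x => g x - μ / 2 * ‖x‖ ^ 2)) :
    ∀ a b, 0 ≤ g a - g b - ⟪g' b, a - b⟫ - μ / 2 * ‖a - b‖ ^ 2
      - 1 / (2 * (1 - μ)) * ‖g' a - g' b - μ • (a - b)‖ ^ 2 := by
  intro a b
  have hgrad_sub : ∀ x, HasGradientAt (fun x => g x - μ / 2 * ‖x‖ ^ 2) (g' x - μ • x) x :=
    fun x => (hgrad x).sub (hasGradientAt_half_mul_norm_sq μ x)
  have hdiff : ∀ a b, (g' a - μ • a) - (g' b - μ • b) = g' a - g' b - μ • (a - b) := by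
    intros; module
  have hinner : ∀ a b, ⟪g' a - g' b, a - b⟫ ≤ ‖a - b‖ ^ 2 := fun a b =>
    calc ⟪g' a - g' b, a - b⟫ ≤ ‖g' a - g' b‖ * ‖a - b‖ := real_inner_le_norm _ _
      _ ≤ ‖a - b‖ * ‖a - b‖ := by gcongr; exact hsmooth a b
      _ = ‖a - b‖ ^ 2 := by ring
  have hupper := le_add_inner_gradient_add_half_mul_norm_sq hgrad_sub (L := 1 - μ) fun a b => by
    rw [hdiff, inner_sub_left, real_inner_smul_left, real_inner_self_eq_norm_sq]
    linarith [hinner a b]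
  have key := hconv.norm_sub_gradient_sq_le hgrad_sub (sub_pos.2 hμ1) hupper a b
  rw [hdiff, inner_sub_left] at key
  linarith [half_mul_norm_sq_sub_half_mul_norm_sq μ b a]

/-- Co-coercivity for 1-smooth, μ-strongly convex functions. -/
theorem cocoercivity (d : ℕ) (μ : ℝ) (hμ0 : 0 ≤ μ) (hμ1 : μ < 1)
    (g : EuclideanSpace ℝ (Fin d) → ℝ) (g' : EuclideanSpace ℝ (Fin d) → EuclideanSpace ℝ (Fin d))
    (hgrad : ∀ x, HasGradientAt g (g' x) x)
    (hsmooth : ∀ a b, ‖g' a - g' b‖ ≤ ‖a - b‖)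
    (hconv : ConvexOn ℝ Set.univ (fun x => g x - μ / 2 * ‖x‖ ^ 2)) :
    ∀ a b, 0 ≤ g a - g b - ⟪g' b, a - b⟫ - μ / 2 * ‖a - b‖ ^ 2
      - 1 / (2 * (1 - μ)) * ‖g' a - g' b - μ • (a - b)‖ ^ 2 :=
  cocoercivity_general d μ hμ1 g g' hgrad hsmooth hconv
end

section
/- For the bilinear objective f(x,y) = xy on ℝ × ℝ, the simultaneous gradient-descent-ascent iteration with momentum, x_{t+1} = x_t - η y_t + β(x_t - x_{t-1}), y_{t+1} = y_t + η x_t + β(y_t - y_{t-1}), with stepsize η = 0.2 and momentum β = -0.8, initialized at (x_0,y_0) = (x_{-1},y_{-1}) = (1,1), does not converge to the saddle point (0,0); in fact the sequence ‖(x_t,y_t)‖ does not tend to 0. -/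
/-!
Identify `(x, y)` with `z = x + i y`. The iteration becomes the scalar recurrence
`z (t + 2) = (1 + β + i η) z (t + 1) - β z t`, whose characteristic polynomial
`r ^ 2 - a r - 0.8`, `a = 0.2 + 0.2 i`, has a root `r` with `|r| ≥ 1` (numerically
`|r| ≈ 1.0008`). The coordinate `z (t + 1) - (a - r) z t` of the state along the corresponding
left eigenvector is multiplied by `r` at every step, and it is nonzero at `t = 0`, so it cannot
tend to `0`.
-/

open Filter Topology

theorem not_tendsto_zero_of_recurrence_of_one_le_norm_root {𝕜 : Type*} [NormedField 𝕜]
    {a b r : 𝕜} {z : ℕ → 𝕜} (hr : r ^ 2 = a * r + b) (hr_norm : 1 ≤ ‖r‖)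
    (hz : ∀ t, z (t + 2) = a * z (t + 1) + b * z t) (h₀ : z 1 ≠ (a - r) * z 0) :
    ¬ Tendsto z atTop (𝓝 0) := by
  set u : ℕ → 𝕜 := fun t => z (t + 1) - (a - r) * z t
  have hu : ∀ t, u t = r ^ t * u 0 := by
    intro t
    induction t with
    | zero => simp
    | succ t ih =>
      calc u (t + 1) = r * u t := by
            simp only [u, hz]; linear_combination (-z t) * hr
        _ = r ^ (t + 1) * u 0 := by rw [ih]; ring
  have hu₀ : 0 < ‖u 0‖ := norm_pos_iff.mpr (sub_ne_zero.mpr h₀ : u 0 ≠ 0)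
  intro hlim
  have hu_lim : Tendsto (fun t => ‖u t‖) atTop (𝓝 0) := by
    simpa using ((hlim.comp (tendsto_add_atTop_nat 1)).sub (hlim.const_mul (a - r))).norm
  refine hu₀.not_ge (ge_of_tendsto' hu_lim fun t => ?_)
  rw [hu t, norm_mul, norm_pow]
  exact le_mul_of_one_le_left (norm_nonneg (u 0)) (one_le_pow₀ hr_norm)

theorem Complex.exists_sq_eq_and_re_nonneg (c : ℂ) : ∃ s : ℂ, s ^ 2 = c ∧ 0 ≤ s.re := by
  obtain ⟨s, hs⟩ := IsAlgClosed.exists_pow_nat_eq c two_pos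
  rcases le_total 0 s.re with h | h
  · exact ⟨s, hs, h⟩
  · exact ⟨-s, by rw [neg_sq, hs], by simpa using h⟩

theorem exists_root_one_le_norm :
    ∃ r : ℂ, r ^ 2 = ⟨0.2, 0.2⟩ * r + 0.8 ∧ 1 ≤ ‖r‖ ∧ 0 ≤ r.re := by
  -- `r = (a + s) / 2` with `s ^ 2 = a ^ 2 + 4 * 0.8 = 3.2 + 0.08 i`
  obtain ⟨s, hs, hs_re⟩ := Complex.exists_sq_eq_and_re_nonneg ⟨3.2, 0.08⟩
  obtain ⟨p, q⟩ := s
  have hre : p ^ 2 - q ^ 2 = 3.2 := by simpa [sq] using congrArg Complex.re hs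
  have him : p * q = 0.04 := by
    have := congrArg Complex.im hs
    simp only [sq, Complex.mul_im] at this
    linarith
  refine ⟨(⟨0.2, 0.2⟩ + ⟨p, q⟩) / 2, ?_, ?_, ?_⟩
  · apply Complex.ext <;>
      simp only [sq, Complex.mul_re, Complex.mul_im, Complex.div_ofNat_re, Complex.div_ofNat_im,
        Complex.add_re, Complex.add_im, Complex.re_ofScientific, Complex.im_ofScientific] <;>
      nlinarith
  · rw [← one_le_sq_iff₀ (norm_nonneg _), Complex.sq_norm, Complex.normSq_apply]
    simp only [Complex.div_ofNat_re, Complex.add_re, Complex.div_ofNat_im, Complex.add_im]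
    nlinarith
  · simp only [Complex.div_ofNat_re, Complex.add_re]; linarith

theorem gda_momentum_complex_recurrence {η β : ℝ} {x y xp yp : ℕ → ℝ}
    (hxp : ∀ t, xp (t + 1) = x t) (hyp : ∀ t, yp (t + 1) = y t)
    (hx : ∀ t, x (t + 1) = x t - η * y t + β * (x t - xp t))
    (hy : ∀ t, y (t + 1) = y t + η * x t + β * (y t - yp t)) (t : ℕ) :
    (⟨x (t + 2), y (t + 2)⟩ : ℂ) =
      ⟨1 + β, η⟩ * ⟨x (t + 1), y (t + 1)⟩ + (-β : ℝ) * ⟨x t, y t⟩ := by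
  apply Complex.ext <;> simp only [hx, hy, hxp, hyp, Complex.add_re, Complex.add_im,
    Complex.mul_re, Complex.mul_im, Complex.ofReal_re, Complex.ofReal_im] <;> ring

theorem Complex.tendsto_mk_zero_of_tendsto_norm_prod {α : Type*} {l : Filter α} {x y : α → ℝ}
    (h : Tendsto (fun t => ‖(x t, y t)‖) l (𝓝 0)) :
    Tendsto (fun t => (⟨x t, y t⟩ : ℂ)) l (𝓝 0) :=
  (Complex.equivRealProdCLM.symm.continuous.tendsto 0).comp
    (tendsto_zero_iff_norm_tendsto_zero.mpr h)

/-- Simultaneous GDA with momentum β = -0.8 and stepsize η = 0.2 on f(x,y) = xy,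
initialized at (1,1) (with x_{-1} = x_0, y_{-1} = y_0), does not converge to (0,0).
Here `xp t`, `yp t` denote the previous iterates x_{t-1}, y_{t-1}. -/
theorem simultaneous_negative_momentum_diverges
    (η β : ℝ) (hη : η = 0.2) (hβ : β = -0.8)
    (x y xp yp : ℕ → ℝ)
    (hx0 : x 0 = 1) (hy0 : y 0 = 1) (hxp0 : xp 0 = 1) (hyp0 : yp 0 = 1)
    (hxp : ∀ t, xp (t + 1) = x t) (hyp : ∀ t, yp (t + 1) = y t)
    (hx : ∀ t, x (t + 1) = x t - η * y t + β * (x t - xp t))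
    (hy : ∀ t, y (t + 1) = y t + η * x t + β * (y t - yp t)) :
    ¬ Tendsto (fun t => ‖(x t, y t)‖) atTop (nhds 0) := by
  subst hη hβ
  obtain ⟨r, hr, hr_norm, hr_re⟩ := exists_root_one_le_norm
  have hz (t : ℕ) : (⟨x (t + 2), y (t + 2)⟩ : ℂ) =
      ⟨0.2, 0.2⟩ * ⟨x (t + 1), y (t + 1)⟩ + 0.8 * ⟨x t, y t⟩ := by
    rw [gda_momentum_complex_recurrence hxp hyp hx hy t]; norm_num
  have hx1 : x 1 = 0.8 := by rw [hx, hx0, hy0, hxp0]; norm_num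
  have hy1 : y 1 = 1.2 := by rw [hy, hx0, hy0, hyp0]; norm_num
  have h₀ : (⟨x 1, y 1⟩ : ℂ) ≠ (⟨0.2, 0.2⟩ - r) * ⟨x 0, y 0⟩ := by
    -- equality would force `r = -0.8`
    intro h
    have h_re := congrArg Complex.re h
    have h_im := congrArg Complex.im h
    simp only [hx0, hy0, hx1, hy1, Complex.mul_re, Complex.mul_im, Complex.sub_re,
      Complex.sub_im] at h_re h_im
    linarith
  exact fun h => not_tendsto_zero_of_recurrence_of_one_le_norm_root (z := fun t => ⟨x t, y t⟩)
    hr hr_norm hz h₀ (Complex.tendsto_mk_zero_of_tendsto_norm_prod h)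
end

section
/- Let f(x,y) = (μ/2)x² + √(1-μ²)·x·y - (μ/2)y² on ℝ × ℝ with 0 < μ < 1. Then f is 1-smooth and μ-strongly-convex-strongly-concave, and (0,0) is its unique saddle point. -/
/-- The objective f(x,y) = (μ/2)x² + √(1-μ²)xy - (μ/2)y² is 1-smooth (its gradient map is
1-Lipschitz in the Euclidean norm) and μ-strongly-convex-strongly-concave, with unique
saddle point (0,0). -/
theorem quadratic_example_properties (μ : ℝ) (hμ0 : 0 < μ) (hμ1 : μ < 1) :
    let f : ℝ → ℝ → ℝ := fun x y => μ / 2 * x ^ 2 + Real.sqrt (1 - μ ^ 2) * x * y - μ / 2 * y ^ 2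
    let gx : ℝ → ℝ → ℝ := fun x y => μ * x + Real.sqrt (1 - μ ^ 2) * y
    let gy : ℝ → ℝ → ℝ := fun x y => Real.sqrt (1 - μ ^ 2) * x - μ * y
    -- gx, gy are the partial gradients of f:
    (∀ x y, HasDerivAt (fun x' => f x' y) (gx x y) x) ∧
    (∀ x y, HasDerivAt (fun y' => f x y') (gy x y) y) ∧
    -- 1-smoothness: the gradient map is 1-Lipschitz:
    (∀ x₁ y₁ x₂ y₂, (gx x₁ y₁ - gx x₂ y₂) ^ 2 + (gy x₁ y₁ - gy x₂ y₂) ^ 2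
      ≤ (x₁ - x₂) ^ 2 + (y₁ - y₂) ^ 2) ∧
    -- μ-strong convexity in x and μ-strong concavity in y:
    (∀ y, ConvexOn ℝ Set.univ (fun x => f x y - μ / 2 * x ^ 2)) ∧
    (∀ x, ConvexOn ℝ Set.univ (fun y => -f x y - μ / 2 * y ^ 2)) ∧
    -- (0,0) is the unique saddle point (unique stationary point):
    (∀ x y, (gx x y = 0 ∧ gy x y = 0) ↔ (x = 0 ∧ y = 0)) := by
  intro f gx gy
  set s := Real.sqrt (1 - μ ^ 2) with hs_def
  have hs2 : s ^ 2 = 1 - μ ^ 2 := Real.sq_sqrt (by nlinarith)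
  have hspos : 0 < s := Real.sqrt_pos.mpr (by nlinarith)
  refine ⟨?_, ?_, ?_, ?_, ?_, ?_⟩
  · intro x y
    have h : HasDerivAt (fun x' => μ / 2 * x' ^ 2 + s * x' * y - μ / 2 * y ^ 2)
        (μ / 2 * (↑(2:ℕ) * x ^ (2 - 1)) + s * 1 * y - 0) x :=
      (((hasDerivAt_pow 2 x).const_mul (μ / 2)).add
        ((hasDerivAt_id' x).const_mul s |>.mul_const y)).sub (hasDerivAt_const x _)
    convert h using 1
    push_cast; ring
  · intro x y
    have h : HasDerivAt (fun y' => μ / 2 * x ^ 2 + s * x * y' - μ / 2 * y' ^ 2)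
        (0 + s * x * 1 - μ / 2 * (↑(2:ℕ) * y ^ (2 - 1))) y :=
      ((hasDerivAt_const y _).add ((hasDerivAt_id' y).const_mul (s * x))).sub
        ((hasDerivAt_pow 2 y).const_mul (μ / 2))
    convert h using 1
    push_cast; ring
  · intro x₁ y₁ x₂ y₂
    simp only [gx, gy]
    nlinarith [sq_nonneg (x₁ - x₂), sq_nonneg (y₁ - y₂)]
  · intro y
    refine ⟨convex_univ, ?_⟩
    intro a _ b _ p q hp hq hpq
    simp only [f, smul_eq_mul]
    refine le_of_eq ?_
    have hq' : q = 1 - p := by linarith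
    subst hq'; ring
  · intro x
    refine ⟨convex_univ, ?_⟩
    intro a _ b _ p q hp hq hpq
    simp only [f, smul_eq_mul]
    refine le_of_eq ?_
    have hq' : q = 1 - p := by linarith
    subst hq'; ring
  · intro x y
    constructor
    · rintro ⟨h1, h2⟩
      simp only [gx] at h1
      simp only [gy] at h2
      have hx : x = 0 := by linear_combination μ * h1 + s * h2 - x * hs2
      have hy : y = 0 := by linear_combination s * h1 - μ * h2 - y * hs2
      exact ⟨hx, hy⟩
    · rintro ⟨hx, hy⟩
      simp [gx, gy, hx, hy]
end

section
/- For the bilinear objective f(x,y) = xy on ℝ × ℝ, the alternating GDA iteration with negative momentum, x_{t+1} = x_t - η y_t + β(x_t - x_{t-1}), y_{t+1} = y_t + η x_{t+1} + β(y_t - y_{t-1}), with η = 1/5 and β = -1/2 and initialization x_{-1} = x_0, y_{-1} = y_0, converges to the saddle point: (x_t, y_t) → (0,0) as t → ∞ for every initialization (x_0, y_0). -/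
open Filter

/-- Lyapunov quadratic form `sᵀ P s` for the state `s = (a, b, c, d)`. -/
noncomputable def gdaLyap (a b c d : ℝ) : ℝ :=
  77 * a ^ 2 + 1825/24 * b ^ 2 + 1921/96 * c ^ 2 + 1921/96 * d ^ 2
    - 20 * a * b + 75 * a * c - 125/24 * b * c + 1775/24 * b * d + 125/48 * c * d

/-- Alternating GDA with negative momentum (η = 1/5, β = -1/2) on f(x,y) = xy converges to the
saddle point (0,0) from every initialization (with x_{-1} = x_0, y_{-1} = y_0). `xp t`, `yp t`
denote x_{t-1}, y_{t-1}. -/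
theorem alternating_negative_momentum_bilinear_converges
    (x y xp yp : ℕ → ℝ)
    (hxp0 : xp 0 = x 0) (hyp0 : yp 0 = y 0)
    (hxp : ∀ t, xp (t + 1) = x t) (hyp : ∀ t, yp (t + 1) = y t)
    (hx : ∀ t, x (t + 1) = x t - (1 / 5) * y t + (-(1 / 2)) * (x t - xp t))
    (hy : ∀ t, y (t + 1) = y t + (1 / 5) * x (t + 1) + (-(1 / 2)) * (y t - yp t)) :
    Tendsto (fun t => (x t, y t)) atTop (nhds (0, 0)) := by
  -- Lyapunov function V(s) = sᵀ P s for the state s = (x t, y t, xp t, yp t),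
  -- where P solves the discrete Lyapunov equation Mᵀ P M - P = -I.
  have hV : ∀ t, gdaLyap (x t) (y t) (xp t) (yp t) =
      77 * x t ^ 2 + 1825/24 * y t ^ 2 + 1921/96 * xp t ^ 2 + 1921/96 * yp t ^ 2
      - 20 * x t * y t + 75 * x t * xp t - 125/24 * y t * xp t
      + 1775/24 * y t * yp t + 125/48 * xp t * yp t := fun t => rfl
  set V : ℕ → ℝ := fun t => gdaLyap (x t) (y t) (xp t) (yp t) with hVdef
  -- Contraction: V(t+1) ≤ (104/105) V(t), via an exact sum-of-squares identity.
  have key : ∀ t, V (t + 1) ≤ (104/105) * V t := by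
    intro t
    have hid : (104/105) * V t - V (t + 1) =
        4/15 * (x t + 5/14 * y t - 75/56 * xp t) ^ 2
        + 853/3528 * (y t + 1075/1706 * xp t - 2485/1706 * yp t) ^ 2
        + 48131/204720 * (xp t + 300250/336917 * yp t) ^ 2
        + 15524497/141505140 * yp t ^ 2 := by
      simp only [hVdef, hV]
      rw [hy t, hx t, hxp t, hyp t]
      ring
    nlinarith [sq_nonneg (x t + 5/14 * y t - 75/56 * xp t),
      sq_nonneg (y t + 1075/1706 * xp t - 2485/1706 * yp t),
      sq_nonneg (xp t + 300250/336917 * yp t), sq_nonneg (yp t)]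
  -- Lower bound: x t ^ 2 + y t ^ 2 ≤ V t  (P - I is positive semidefinite).
  have lb : ∀ t, x t ^ 2 + y t ^ 2 ≤ V t := by
    intro t
    have hid : V t - (x t ^ 2 + y t ^ 2 + xp t ^ 2 + yp t ^ 2) =
        76 * (x t - 5/38 * y t + 75/152 * xp t) ^ 2
        + 33619/456 * (y t + 2125/67238 * xp t + 33725/67238 * yp t) ^ 2
        + 233175/537904 * (xp t + 2870/9327 * yp t) ^ 2
        + 15725/37308 * yp t ^ 2 := by
      simp only [hVdef, hV]; ring
    linarith [sq_nonneg (x t - 5/38 * y t + 75/152 * xp t),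
      sq_nonneg (y t + 2125/67238 * xp t + 33725/67238 * yp t),
      sq_nonneg (xp t + 2870/9327 * yp t), sq_nonneg (yp t), sq_nonneg (xp t)]
  -- Geometric decay of V.
  have decay : ∀ t, V t ≤ (104/105 : ℝ) ^ t * V 0 := by
    intro t
    induction t with
    | zero => simp
    | succ n ih =>
      calc V (n + 1) ≤ (104/105) * V n := key n
        _ ≤ (104/105) * ((104/105 : ℝ) ^ n * V 0) := by
            have : (0:ℝ) ≤ 104/105 := by norm_num
            nlinarith
        _ = (104/105 : ℝ) ^ (n + 1) * V 0 := by ring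
  -- The geometric bound tends to 0.
  have hgeo : Tendsto (fun t => (104/105 : ℝ) ^ t * V 0) atTop (nhds 0) := by
    have h1 : Tendsto (fun t => (104/105 : ℝ) ^ t) atTop (nhds 0) :=
      tendsto_pow_atTop_nhds_zero_of_lt_one (by norm_num) (by norm_num)
    simpa using h1.mul_const (V 0)
  -- squares of x and y tend to 0
  have hb : ∀ (f : ℕ → ℝ), (∀ t, f t ^ 2 ≤ (104/105 : ℝ) ^ t * V 0) →
      Tendsto f atTop (nhds 0) := by
    intro f hf
    have hsq : Tendsto (fun t => f t ^ 2) atTop (nhds 0) :=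
      squeeze_zero (fun t => sq_nonneg _) hf hgeo
    have habs : Tendsto (fun t => |f t|) atTop (nhds 0) := by
      simpa [Real.sqrt_sq_eq_abs, Real.sqrt_zero] using hsq.sqrt
    have h1 : Tendsto (fun t => -|f t|) atTop (nhds 0) := by
      simpa using habs.neg
    exact tendsto_of_tendsto_of_tendsto_of_le_of_le h1 habs
      (fun t => neg_abs_le _) (fun t => le_abs_self _)
  have hxt : Tendsto x atTop (nhds 0) := by
    refine hb x fun t => ?_
    have := lb t
    have := decay t
    linarith [sq_nonneg (y t)]
  have hyt : Tendsto y atTop (nhds 0) := by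
    refine hb y fun t => ?_
    have := lb t
    have := decay t
    linarith [sq_nonneg (x t)]
  exact hxt.prodMk_nhds hyt
end
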